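/- For any 0 ≤ s ≤ t ≤ 1, H ∈ (0,1), r > 0 and ε ∈ [0,H), one has ∫_ℝ |γ_{s,t}(ξ,r)|² / |ξ|^{2H−1} dξ ≤ C |t−s|^{2ε} / (1 + r^{4(H−ε)}), where the constant C depends only on H and ε. -/

import Mathlib

open MeasureTheory

noncomputable def gammaH (t ξ r : ℝ) : ℂ :=
  Complex.exp (Complex.I * ξ * t) *
    ∫ s in (0:ℝ)..t, Complex.exp (-(s:ℂ) * (r:ℂ)^2) * Complex.exp (-Complex.I * ξ * s)

/-!
For `r ≠ 0` the integral defining `γ_t` is explicit, `γ_t = (e^{iξt} - e^{-tr²}) / (r² + iξ)`. Both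
exponentials are bounded and `1`-Lipschitz in `t`, so `|γ_t - γ_s| ≤ 4 min(t - s, |r² + iξ|⁻¹)`, and
interpolating between the two terms of the minimum gives `|γ_t - γ_s|² ≤ 16 (t - s)^{2ε} c^{2ε-2}` for
every `0 < c ≤ |r² + iξ|`, and also for `0 < c ≤ 1` since `t - s ≤ 1`.
Using this with `c = |ξ|` and with `c = 1` or `c = r²` bounds the integrand by
`16 (t - s)^{2ε} c^q m(ξ / c)`, where `m(x) = min(|x|^{1-2H}, |x|^q)`, `q = 2ε - 2H - 1`, is integrable
because `1 - 2H > -1 > q`. By scaling, its integral is `c^{2ε-2H} ∫ m`: the choice `c = 1` bounds the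
left-hand side uniformly in `r`, the choice `c = r²` gives the decay `r^{-4(H-ε)}`.
-/

open Complex

lemma ofReal_sq_add_I_mul_ne_zero {r : ℝ} (hr : r ≠ 0) (ξ : ℝ) : (r : ℂ) ^ 2 + I * ξ ≠ 0 := by
  intro h
  have := congrArg re h
  simp [← ofReal_pow] at this
  exact hr this

lemma sq_le_norm_ofReal_sq_add_I_mul (r ξ : ℝ) : r ^ 2 ≤ ‖(r : ℂ) ^ 2 + I * ξ‖ := by
  convert re_le_norm ((r : ℂ) ^ 2 + I * ξ) using 1
  simp [← ofReal_pow]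

lemma abs_le_norm_ofReal_sq_add_I_mul (r ξ : ℝ) : |ξ| ≤ ‖(r : ℂ) ^ 2 + I * ξ‖ := by
  convert abs_im_le_norm ((r : ℂ) ^ 2 + I * ξ) using 2
  simp [← ofReal_pow]

lemma gammaH_eq_div {r : ℝ} (hr : r ≠ 0) (t ξ : ℝ) :
    gammaH t ξ r = (cexp (I * ξ * t) - cexp (-t * r ^ 2)) / (r ^ 2 + I * ξ) := by
  have hz := ofReal_sq_add_I_mul_ne_zero hr ξ
  have hexp : ∀ s : ℝ, cexp (-s * r ^ 2) * cexp (-I * ξ * s) = cexp (-(r ^ 2 + I * ξ) * s) := by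
    intro s; rw [← Complex.exp_add]; ring_nf
  rw [gammaH, intervalIntegral.integral_congr (fun s _ => hexp s),
    integral_exp_mul_complex (neg_ne_zero.mpr hz)]
  field_simp
  simp only [ofReal_zero, mul_zero, neg_zero, Complex.exp_zero, mul_sub, mul_one, ← Complex.exp_add]
  ring_nf

lemma norm_exp_I_mul_sub_exp_I_mul_le (a b : ℝ) :
    ‖cexp (I * a) - cexp (I * b)‖ ≤ min 2 |a - b| := by
  have hfactor : cexp (I * a) - cexp (I * b) = cexp (I * b) * (cexp (I * ↑(a - b)) - 1) := by
    rw [mul_sub, ← Complex.exp_add]; push_cast; ring_nf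
  rw [hfactor, norm_mul, norm_exp_I_mul_ofReal, one_mul, ← Real.norm_eq_abs]
  refine le_min ?_ Real.norm_exp_I_mul_ofReal_sub_one_le
  calc ‖cexp (I * ↑(a - b)) - 1‖ ≤ ‖cexp (I * ↑(a - b))‖ + ‖(1 : ℂ)‖ := norm_sub_le _ _
    _ = 2 := by rw [norm_exp_I_mul_ofReal, norm_one]; norm_num

lemma abs_exp_neg_mul_sub_exp_neg_mul_le {s t x : ℝ} (hs : 0 ≤ s) (hst : s ≤ t) (hx : 0 ≤ x) :
    |Real.exp (-(s * x)) - Real.exp (-(t * x))| ≤ min 1 ((t - s) * x) := by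
  have hsplit : Real.exp (-(t * x)) = Real.exp (-(s * x)) * Real.exp (-((t - s) * x)) := by
    rw [← Real.exp_add]; ring_nf
  have hdecay : Real.exp (-(s * x)) ≤ 1 := Real.exp_le_one_iff.mpr (by nlinarith)
  have hgap : 1 - Real.exp (-((t - s) * x)) ≤ (t - s) * x := by
    linarith [Real.one_sub_le_exp_neg ((t - s) * x)]
  have hgap0 : Real.exp (-((t - s) * x)) ≤ 1 := Real.exp_le_one_iff.mpr (by nlinarith)
  have hpos := Real.exp_pos (-(s * x))
  have hpos' := Real.exp_pos (-((t - s) * x))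
  rw [hsplit, abs_of_nonneg (by nlinarith)]
  exact le_min (by nlinarith) (by nlinarith)

lemma norm_gammaH_sub_le {s t r : ℝ} (ξ : ℝ) (hr : r ≠ 0) (hs : 0 ≤ s) (hst : s ≤ t) :
    ‖gammaH t ξ r - gammaH s ξ r‖ ≤ 4 * min (t - s) ‖(r : ℂ) ^ 2 + I * ξ‖⁻¹ := by
  have hz : 0 < ‖(r : ℂ) ^ 2 + I * ξ‖ := norm_pos_iff.mpr (ofReal_sq_add_I_mul_ne_zero hr ξ)
  have hdiff : gammaH t ξ r - gammaH s ξ r =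
      ((cexp (I * ξ * t) - cexp (I * ξ * s)) + (cexp (-s * r ^ 2) - cexp (-t * r ^ 2))) /
        ((r : ℂ) ^ 2 + I * ξ) := by
    rw [gammaH_eq_div hr, gammaH_eq_div hr, div_sub_div_same]
    congr 1
    ring
  have hosc : ‖cexp (I * ξ * t) - cexp (I * ξ * s)‖ ≤ min 2 (|ξ| * (t - s)) := by
    have := norm_exp_I_mul_sub_exp_I_mul_le (ξ * t) (ξ * s)
    rwa [← mul_sub, abs_mul, abs_of_nonneg (sub_nonneg.mpr hst), ofReal_mul, ofReal_mul,
      ← mul_assoc, ← mul_assoc] at this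
  have hdecay : ‖cexp (-s * r ^ 2) - cexp (-t * r ^ 2)‖ ≤ min 1 ((t - s) * r ^ 2) := by
    have hreal : ∀ u : ℝ, cexp (-u * r ^ 2) = ↑(Real.exp (-(u * r ^ 2))) := by
      intro u; push_cast; ring_nf
    rw [hreal, hreal, ← ofReal_sub, norm_real, Real.norm_eq_abs]
    exact abs_exp_neg_mul_sub_exp_neg_mul_le hs hst (sq_nonneg r)
  have hnum := norm_add_le (cexp (I * ξ * t) - cexp (I * ξ * s))
    (cexp (-s * r ^ 2) - cexp (-t * r ^ 2))
  have hnum_le_four : ‖(cexp (I * ξ * t) - cexp (I * ξ * s)) +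
      (cexp (-s * r ^ 2) - cexp (-t * r ^ 2))‖ ≤ 4 := by
    linarith [min_le_left (2 : ℝ) (|ξ| * (t - s)), min_le_left (1 : ℝ) ((t - s) * r ^ 2)]
  have hnum_le_lip : ‖(cexp (I * ξ * t) - cexp (I * ξ * s)) +
      (cexp (-s * r ^ 2) - cexp (-t * r ^ 2))‖ ≤ 2 * (t - s) * ‖(r : ℂ) ^ 2 + I * ξ‖ := by
    have hξ := abs_le_norm_ofReal_sq_add_I_mul r ξ
    have hr2 := sq_le_norm_ofReal_sq_add_I_mul r ξ
    have hδ : 0 ≤ t - s := sub_nonneg.mpr hst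
    nlinarith [min_le_right (2 : ℝ) (|ξ| * (t - s)), min_le_right (1 : ℝ) ((t - s) * r ^ 2)]
  rw [hdiff, norm_div, div_le_iff₀ hz]
  rcases min_cases (t - s) ‖(r : ℂ) ^ 2 + I * ξ‖⁻¹ with ⟨h, -⟩ | ⟨h, -⟩ <;> rw [h]
  · nlinarith
  · rwa [inv_mul_cancel_right₀ hz.ne']

lemma min_le_rpow_mul_rpow {a b ε : ℝ} (ha : 0 ≤ a) (hb : 0 ≤ b) (hε0 : 0 ≤ ε) (hε1 : ε ≤ 1) :
    min a b ≤ a ^ ε * b ^ (1 - ε) := by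
  have hm : 0 ≤ min a b := le_min ha hb
  calc min a b = min a b ^ ε * min a b ^ (1 - ε) := by
        rw [← Real.rpow_add' hm (by norm_num), add_sub_cancel, Real.rpow_one]
    _ ≤ a ^ ε * b ^ (1 - ε) := by
        gcongr
        exacts [min_le_left a b, min_le_right a b]

lemma sq_norm_gammaH_sub_le {s t r ε μ : ℝ} (ξ : ℝ) (hr : r ≠ 0) (hs : 0 ≤ s) (hst : s ≤ t)
    (ht : t ≤ 1) (hε0 : 0 ≤ ε) (hε1 : ε ≤ 1) (hμ : 0 < μ)
    (hμz : μ ≤ max 1 ‖(r : ℂ) ^ 2 + I * ξ‖) :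
    ‖gammaH t ξ r - gammaH s ξ r‖ ^ 2 ≤ 16 * (t - s) ^ (2 * ε) * μ ^ (2 * ε - 2) := by
  have hδ : 0 ≤ t - s := sub_nonneg.mpr hst
  have hmin : min (t - s) ‖(r : ℂ) ^ 2 + I * ξ‖⁻¹ ≤ min (t - s) μ⁻¹ := by
    rcases le_max_iff.mp hμz with h | h
    · exact (min_le_left _ _).trans (le_min le_rfl (by linarith [one_le_inv₀ hμ |>.mpr h]))
    · exact min_le_min_left _ (inv_anti₀ hμ h)
  have hnorm : ‖gammaH t ξ r - gammaH s ξ r‖ ≤ 4 * ((t - s) ^ ε * μ⁻¹ ^ (1 - ε)) :=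
    (norm_gammaH_sub_le ξ hr hs hst).trans <| by
      gcongr
      exact hmin.trans (min_le_rpow_mul_rpow hδ (inv_nonneg.mpr hμ.le) hε0 hε1)
  calc ‖gammaH t ξ r - gammaH s ξ r‖ ^ 2
      ≤ (4 * ((t - s) ^ ε * μ⁻¹ ^ (1 - ε))) ^ 2 := by gcongr
    _ = 16 * (t - s) ^ (2 * ε) * μ ^ (2 * ε - 2) := by
      rw [Real.inv_rpow hμ.le, mul_pow, mul_pow, inv_pow, ← Real.rpow_mul_natCast hδ,
        ← Real.rpow_mul_natCast hμ.le, ← Real.rpow_neg hμ.le]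
      ring_nf

noncomputable def absRpowMin (p q x : ℝ) : ℝ := min (|x| ^ p) (|x| ^ q)

open Set in
lemma integrable_absRpowMin {p q : ℝ} (hp : -1 < p) (hq : q < -1) :
    Integrable (absRpowMin p q) := by
  have hmeas : AEStronglyMeasurable (absRpowMin p q) := by
    unfold absRpowMin; fun_prop
  have hnorm : ∀ x, ‖absRpowMin p q x‖ = absRpowMin p q x := fun x =>
    Real.norm_of_nonneg (le_min (by positivity) (by positivity))
  have hsmall : IntegrableOn (absRpowMin p q) (Ioc 0 1) :=
    Integrable.mono' (intervalIntegral.intervalIntegrable_rpow' hp).1 hmeas.restrict <| by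
      filter_upwards [ae_restrict_mem measurableSet_Ioc] with x hx
      rw [hnorm, absRpowMin, abs_of_pos hx.1]
      exact min_le_left _ _
  have hlarge : IntegrableOn (absRpowMin p q) (Ioi 1) :=
    Integrable.mono' (integrableOn_Ioi_rpow_of_lt hq one_pos) hmeas.restrict <| by
      filter_upwards [ae_restrict_mem measurableSet_Ioi] with x hx
      rw [hnorm, absRpowMin, abs_of_pos (one_pos.trans hx)]
      exact min_le_right _ _
  have hpos : IntegrableOn (absRpowMin p q) (Ioi 0) := by
    rw [← Ioc_union_Ioi_eq_Ioi zero_le_one]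
    exact hsmall.union hlarge
  have hneg : IntegrableOn (absRpowMin p q) (Iio 0) := by
    have heven : (fun x => absRpowMin p q (-x)) = absRpowMin p q := by
      funext x; rw [absRpowMin, absRpowMin, abs_neg]
    exact heven ▸ (neg_zero (G := ℝ) ▸ hpos).comp_neg_Iio
  rw [← integrableOn_univ, ← Iio_union_Ici (a := 0), integrableOn_union,
    integrableOn_Ici_iff_integrableOn_Ioi]
  exact ⟨hneg, hpos⟩

lemma rpow_mul_absRpowMin_div (p q : ℝ) {c : ℝ} (hc : 0 < c) (x : ℝ) :
    c ^ q * absRpowMin p q (x / c) = min (c ^ (q - p) * |x| ^ p) (|x| ^ q) := by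
  rw [absRpowMin, abs_div, abs_of_pos hc, Real.div_rpow (abs_nonneg x) hc.le,
    Real.div_rpow (abs_nonneg x) hc.le, mul_min_of_nonneg _ _ (by positivity),
    Real.rpow_sub hc, mul_div_cancel₀ _ (by positivity)]
  congr 1
  field_simp

lemma integral_rpow_mul_absRpowMin_div (p q : ℝ) {c : ℝ} (hc : 0 < c) :
    ∫ x, c ^ q * absRpowMin p q (x / c) = c ^ (q + 1) * ∫ x, absRpowMin p q x := by
  rw [integral_const_mul, Measure.integral_comp_div, smul_eq_mul, abs_of_pos hc,
    Real.rpow_add_one hc.ne']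
  ring

lemma sq_norm_gammaH_sub_div_le {H ε s t r c : ℝ} {ξ : ℝ} (hξ : ξ ≠ 0) (hr : r ≠ 0) (hs : 0 ≤ s)
    (hst : s ≤ t) (ht : t ≤ 1) (hε0 : 0 ≤ ε) (hε1 : ε ≤ 1) (hc : 0 < c)
    (hcr : c ≤ max 1 (r ^ 2)) :
    ‖gammaH t ξ r - gammaH s ξ r‖ ^ 2 / |ξ| ^ (2 * H - 1) ≤
      16 * (t - s) ^ (2 * ε) *
        (c ^ (2 * ε - 2 * H - 1) * absRpowMin (1 - 2 * H) (2 * ε - 2 * H - 1) (ξ / c)) := by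
  have hξ0 : 0 < |ξ| := abs_pos.mpr hξ
  have hc_le := sq_norm_gammaH_sub_le ξ hr hs hst ht hε0 hε1 hc
    (hcr.trans (max_le_max le_rfl (sq_le_norm_ofReal_sq_add_I_mul r ξ)))
  have hξ_le := sq_norm_gammaH_sub_le ξ hr hs hst ht hε0 hε1 hξ0
    (le_max_of_le_right (abs_le_norm_ofReal_sq_add_I_mul r ξ))
  rw [rpow_mul_absRpowMin_div _ _ hc, mul_min_of_nonneg _ _ (by positivity), div_eq_mul_inv,
    ← Real.rpow_neg (abs_nonneg ξ), neg_sub]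
  refine le_min ?_ ?_
  · calc _ ≤ 16 * (t - s) ^ (2 * ε) * c ^ (2 * ε - 2) * |ξ| ^ (1 - 2 * H) := by gcongr
      _ = _ := by ring_nf
  · calc _ ≤ 16 * (t - s) ^ (2 * ε) * |ξ| ^ (2 * ε - 2) * |ξ| ^ (1 - 2 * H) := by gcongr
      _ = _ := by rw [mul_assoc, ← Real.rpow_add hξ0]; ring_nf

lemma integral_sq_norm_gammaH_sub_div_le {H ε s t r c : ℝ} (hH : H < 1) (hε0 : 0 ≤ ε)
    (hεH : ε < H) (hr : r ≠ 0) (hs : 0 ≤ s) (hst : s ≤ t) (ht : t ≤ 1) (hc : 0 < c)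
    (hcr : c ≤ max 1 (r ^ 2)) :
    ∫ ξ : ℝ, ‖gammaH t ξ r - gammaH s ξ r‖ ^ 2 / |ξ| ^ (2 * H - 1) ≤
      16 * (t - s) ^ (2 * ε) *
        (c ^ (2 * ε - 2 * H) * ∫ x, absRpowMin (1 - 2 * H) (2 * ε - 2 * H - 1) x) := by
  have hint := integrable_absRpowMin (p := 1 - 2 * H) (q := 2 * ε - 2 * H - 1)
    (by linarith) (by linarith)
  have hscaled := integral_rpow_mul_absRpowMin_div (1 - 2 * H) (2 * ε - 2 * H - 1) hc
  rw [show 2 * ε - 2 * H - 1 + 1 = 2 * ε - 2 * H by ring] at hscaled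
  rw [← hscaled, ← integral_const_mul]
  refine integral_mono_of_nonneg (ae_of_all _ fun ξ => by positivity)
    (((hint.comp_div hc.ne').const_mul _).const_mul _) ?_
  filter_upwards [volume.ae_ne 0] with ξ hξ
  exact sq_norm_gammaH_sub_div_le hξ hr hs hst ht hε0 (by linarith) hc hcr

theorem stmt4 (H ε : ℝ) (hH : H ∈ Set.Ioo (0:ℝ) 1) (hε : 0 ≤ ε) (hεH : ε < H) :
    ∃ C : ℝ, 0 < C ∧ ∀ s t r : ℝ, 0 ≤ s → s ≤ t → t ≤ 1 → 0 < r →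
      (∫ ξ : ℝ, (‖gammaH t ξ r - gammaH s ξ r‖)^2 / |ξ| ^ (2*H - 1)) ≤
        C * |t - s| ^ (2*ε) / (1 + r ^ (4*(H - ε))) := by
  set M := ∫ x, absRpowMin (1 - 2 * H) (2 * ε - 2 * H - 1) x
  have hM : 0 ≤ M := integral_nonneg fun x => le_min (by positivity) (by positivity)
  refine ⟨32 * M + 1, by positivity, fun s t r hs hst ht hr => ?_⟩
  set X := ∫ ξ : ℝ, ‖gammaH t ξ r - gammaH s ξ r‖ ^ 2 / |ξ| ^ (2 * H - 1)
  set D := (t - s) ^ (2 * ε)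
  have hD : 0 ≤ D := Real.rpow_nonneg (sub_nonneg.mpr hst) _
  have hsmall_r : X ≤ 16 * D * M := by
    simpa using integral_sq_norm_gammaH_sub_div_le hH.2 hε hεH hr.ne' hs hst ht one_pos
      (le_max_left _ _)
  have hscale : (r ^ 2) ^ (2 * ε - 2 * H) * r ^ (4 * (H - ε)) = 1 := by
    rw [← Real.rpow_natCast_mul hr.le, ← Real.rpow_add hr]
    convert Real.rpow_zero r using 2
    push_cast
    ring
  have hlarge_r : X * r ^ (4 * (H - ε)) ≤ 16 * D * M := by
    calc X * r ^ (4 * (H - ε))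
        ≤ 16 * D * ((r ^ 2) ^ (2 * ε - 2 * H) * M) * r ^ (4 * (H - ε)) := by
          gcongr
          exact integral_sq_norm_gammaH_sub_div_le hH.2 hε hεH hr.ne' hs hst ht (by positivity)
            (le_max_right _ _)
      _ = 16 * D * M := by linear_combination (16 * D * M) * hscale
  rw [abs_of_nonneg (sub_nonneg.mpr hst), le_div_iff₀ (by positivity), mul_one_add]
  linarith
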